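/- If f is a continuous function on a compact connected metric space E equipped with a finite Borel measure μ of full support, then f has a unique median over E; that is, there is exactly one real number m such that μ{x ∈ E : f(x) ≥ m} ≥ μ(E)/2 and μ{x ∈ E : f(x) ≤ m} ≥ μ(E)/2. -/

import Mathlib

/-!
A median exists for every measurable `f` and finite `μ`: the sets of `t` with
`μ {f ≤ t} ≥ μ(E)/2`, resp. `μ {t ≤ f} ≥ μ(E)/2`, are closed (continuity of `μ` from above),
nonempty, and cover `ℝ`, so by connectedness of `ℝ` they meet. If `a < b` were two medians,
`{f ≤ a}` and `{b ≤ f}` would each carry half of the mass, so the open set `f⁻¹' (a, b)` would be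
null; full support makes it empty, while the intermediate value theorem on the connected space
produces a point in it.
-/

open MeasureTheory Set Filter Topology
open scoped ENNReal

lemma half_le_or_half_le_of_le_add {a b c : ℝ≥0∞} (h : c ≤ a + b) : c / 2 ≤ a ∨ c / 2 ≤ b := by
  by_contra! hlt
  exact (h.trans_lt (ENNReal.add_lt_add hlt.1 hlt.2)).ne (ENNReal.add_halves c).symm

def IsMedian {α : Type*} [MeasurableSpace α] (μ : Measure α) (f : α → ℝ) (m : ℝ) : Prop :=
  μ univ / 2 ≤ μ {x | m ≤ f x} ∧ μ univ / 2 ≤ μ {x | f x ≤ m}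

section Existence

variable {α : Type*} [MeasurableSpace α] {μ : Measure α} [IsFiniteMeasure μ] {f : α → ℝ}

lemma upperSemicontinuous_measure_setOf_le (hf : Measurable f) :
    UpperSemicontinuous fun t => μ {x | f x ≤ t} := by
  intro t c ht
  have hright : Tendsto (fun s => μ {x | f x ≤ s}) (𝓝[>] t) (𝓝 (μ {x | f x ≤ t})) := by
    have hinter : ⋂ s > t, {x | f x ≤ s} = {x | f x ≤ t} := by
      ext x
      simpa using ⟨le_of_forall_gt_imp_ge_of_dense, fun h s hs => h.trans hs.le⟩
    rw [← hinter]
    exact tendsto_measure_biInter_gt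
      (fun _ _ => (measurableSet_le hf measurable_const).nullMeasurableSet)
      (fun _ _ _ hij _ hx => le_trans hx hij) ⟨t + 1, by linarith, measure_ne_top μ _⟩
  rw [← nhdsLE_sup_nhdsGT, eventually_sup]
  exact ⟨eventually_nhdsWithin_of_forall fun s (hs : s ≤ t) =>
      (measure_mono fun x (hx : f x ≤ s) => hx.trans hs).trans_lt ht,
    hright.eventually (gt_mem_nhds ht)⟩

lemma exists_half_le_measure_setOf_le (f : α → ℝ) :
    ∃ t, μ univ / 2 ≤ μ {x | f x ≤ t} := by
  rcases eq_or_ne (μ univ) 0 with h0 | h0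
  · exact ⟨0, by simp [h0]⟩
  have hlim : Tendsto (fun t => μ {x | f x ≤ t}) atTop (𝓝 (μ univ)) := by
    have := tendsto_measure_iUnion_atTop (μ := μ) (s := fun t : ℝ => {x | f x ≤ t})
      fun _ _ hij _ hx => le_trans hx hij
    rwa [iUnion_eq_univ_iff.2 fun x => ⟨f x, le_refl (f x)⟩] at this
  obtain ⟨t, ht⟩ :=
    (hlim.eventually (lt_mem_nhds (ENNReal.half_lt_self h0 (measure_ne_top μ _)))).exists
  exact ⟨t, ht.le⟩

theorem exists_isMedian (hf : Measurable f) : ∃ m, IsMedian μ f m := by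
  have hA := (upperSemicontinuous_measure_setOf_le (μ := μ) hf).isClosed_preimage (μ univ / 2)
  have hB : IsClosed {t | μ univ / 2 ≤ μ {x | t ≤ f x}} := by
    convert ((upperSemicontinuous_measure_setOf_le (μ := μ) hf.neg).isClosed_preimage
      (μ univ / 2)).preimage continuous_neg using 1
    ext t
    simp [neg_le]
  have hcover (t : ℝ) : μ univ ≤ μ {x | t ≤ f x} + μ {x | f x ≤ t} :=
    (measure_mono fun x _ => le_total t (f x)).trans (measure_union_le _ _)
  obtain ⟨a, ha⟩ := exists_half_le_measure_setOf_le (μ := μ) f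
  obtain ⟨b, hb⟩ := exists_half_le_measure_setOf_le (μ := μ) (-f)
  obtain ⟨m, -, hm⟩ := isPreconnected_closed_iff.1 isPreconnected_univ _ _ hB hA
    (fun t _ => half_le_or_half_le_of_le_add (hcover t))
    ⟨-b, trivial, by simpa [neg_le] using hb⟩ ⟨a, trivial, ha⟩
  exact ⟨m, hm⟩

end Existence

section Uniqueness

variable {α : Type*} [MeasurableSpace α] {μ : Measure α} [IsFiniteMeasure μ] {f : α → ℝ}
  {a b : ℝ}

lemma measure_preimage_Ioo_eq_zero (hf : Measurable f) (hab : a < b)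
    (ha : μ univ / 2 ≤ μ {x | f x ≤ a}) (hb : μ univ / 2 ≤ μ {x | b ≤ f x}) :
    μ (f ⁻¹' Ioo a b) = 0 := by
  have hdisj₁ : Disjoint {x | f x ≤ a} (f ⁻¹' Ioo a b) :=
    disjoint_left.2 fun x (hx : f x ≤ a) hx' => hx.not_gt hx'.1
  have hdisj₂ : Disjoint ({x | f x ≤ a} ∪ f ⁻¹' Ioo a b) {x | b ≤ f x} := by
    refine disjoint_left.2 fun x hx (hx' : b ≤ f x) => ?_
    rcases hx with (hx | hx)
    · exact (show f x ≤ a from hx).not_gt (hab.trans_le hx')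
    · exact hx.2.not_ge hx'
  have hle : μ univ / 2 + μ univ / 2 + μ (f ⁻¹' Ioo a b) ≤ μ univ + 0 := calc
    _ = μ univ / 2 + μ (f ⁻¹' Ioo a b) + μ univ / 2 := add_right_comm _ _ _
    _ ≤ μ {x | f x ≤ a} + μ (f ⁻¹' Ioo a b) + μ {x | b ≤ f x} := by gcongr
    _ = μ ({x | f x ≤ a} ∪ f ⁻¹' Ioo a b ∪ {x | b ≤ f x}) := by
      rw [measure_union hdisj₂ (measurableSet_le measurable_const hf),
        measure_union hdisj₁ (hf measurableSet_Ioo)]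
    _ ≤ μ univ + 0 := by rw [add_zero]; exact measure_mono (subset_univ _)
  rw [ENNReal.add_halves] at hle
  exact nonpos_iff_eq_zero.1 (ENNReal.le_of_add_le_add_left (measure_ne_top μ univ) hle)

variable [TopologicalSpace α] [ConnectedSpace α] [OpensMeasurableSpace α] [μ.IsOpenPosMeasure]

theorem IsMedian.eq (hf : Continuous f) (ha : IsMedian μ f a) (hb : IsMedian μ f b) : a = b := by
  by_contra hne
  wlog hab : a < b generalizing a b
  · exact this hb ha (Ne.symm hne) ((not_lt.1 hab).lt_of_ne (Ne.symm hne))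
  have hhalf : μ univ / 2 ≠ 0 := (ENNReal.half_pos (NeZero.ne (μ univ))).ne'
  obtain ⟨x, hx : f x ≤ a⟩ := nonempty_of_measure_ne_zero (ne_bot_of_le_ne_bot hhalf ha.2)
  obtain ⟨y, hy : b ≤ f y⟩ := nonempty_of_measure_ne_zero (ne_bot_of_le_ne_bot hhalf hb.1)
  have hIoo : Ioo a b ⊆ range f :=
    Ioo_subset_Icc_self.trans ((Icc_subset_Icc hx hy).trans (intermediate_value_univ x y hf))
  exact (isOpen_Ioo.preimage hf).measure_ne_zero μ ((nonempty_Ioo.2 hab).preimage' hIoo)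
    (measure_preimage_Ioo_eq_zero hf.measurable hab ha.2 hb.1)

end Uniqueness

theorem unique_median_of_continuous {E : Type*} [MetricSpace E]
    [ConnectedSpace E] [MeasurableSpace E] [BorelSpace E]
    (μ : Measure E) [IsFiniteMeasure μ] [μ.IsOpenPosMeasure]
    (f : E → ℝ) (hf : Continuous f) :
    ∃! m : ℝ, μ Set.univ / 2 ≤ μ {x | m ≤ f x} ∧ μ Set.univ / 2 ≤ μ {x | f x ≤ m} := by
  obtain ⟨m, hm⟩ := exists_isMedian (μ := μ) hf.measurable
  exact ⟨m, hm, fun m' hm' => IsMedian.eq hf hm' hm⟩
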